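/- Let c : {0,…,N−1} → ℝ be a deterministic signal and let z(n) = d(n)·(c(n) + q(n)) for each n, where d(0),…,d(N−1), q(0),…,q(N−1) are mutually independent random variables, each d(n) is Bernoulli(p) (value 1 with probability p, value 0 with probability 1−p), and each q(n) takes values Δ/2 and −Δ/2 with probability 1/2 each. Then for every frequency index m ∈ {0,…,N−1}: E[Z(m)] = p·C(m) and E[|Z(m) − p·C(m)|²] = (p − p²)·Σ_{n=0}^{N−1} c(n)² + p·N·Δ²/4, where Z(m) = Σ_{n=0}^{N−1} z(n) e^{−2πi nm/N} and C(m) = Σ_{n=0}^{N−1} c(n) e^{−2πi nm/N}. -/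

import Mathlib

open MeasureTheory ProbabilityTheory

/-- The DFT kernel `e^{-2πi n m / N}`. -/
noncomputable def dftKernel (N : ℕ) (n m : Fin N) : ℂ :=
  Complex.exp (-2 * (Real.pi : ℂ) * Complex.I * ((n : ℕ) : ℂ) * ((m : ℕ) : ℂ) / ((N : ℕ) : ℂ))

open scoped ENNReal ComplexConjugate

/-! Write `Y n = d n * (c n + q n) - p * c n`, so that `Z(m) - p C(m) = ∑ Y n e(n, m)` with
`e = dftKernel N`. Independence of `d n` and `q n` gives `E[d n q n] = 0`, hence `E[Y n] = 0`;
since `d n ∈ {0, 1}` and `q n = ±Δ/2`, the square `Y n ^ 2` is a.s. affine in `d n` and `d n q n`,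
which gives `E[Y n ^ 2] = (p - p²) c n ² + p Δ²/4`. The `Y n` are pairwise independent and
centred, so the cross terms of `|∑ Y n e(n, m)|²` have mean zero, and `|e(n, m)| = 1` leaves
`∑ E[Y n ^ 2]`. -/

theorem norm_dftKernel (N : ℕ) (n m : Fin N) : ‖dftKernel N n m‖ = 1 := by
  rw [dftKernel, Complex.norm_exp]
  simp

theorem ProbabilityTheory.iIndepFun.indepFun_prodMk_sumElim {Ω ι β : Type*} [MeasurableSpace Ω]
    {μ : Measure Ω} [MeasurableSpace β] {f g : ι → Ω → β} (h : iIndepFun (Sum.elim f g) μ)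
    (hf : ∀ i, Measurable (f i)) (hg : ∀ i, Measurable (g i)) {i j : ι} (hij : i ≠ j) :
    IndepFun (fun ω => (f i ω, g i ω)) (fun ω => (f j ω, g j ω)) μ := by
  simpa using h.indepFun_prodMk_prodMk (Sum.forall.2 ⟨hf, hg⟩) (.inl i) (.inr i) (.inl j)
    (.inr j) (by simp [hij]) (by simp) (by simp) (by simp [hij])

theorem norm_sq_sum_ofReal_mul {ι : Type*} [Fintype ι] (y : ι → ℝ) (w : ι → ℂ) :
    ‖∑ i, (y i : ℂ) * w i‖ ^ 2 = ∑ i, ∑ j, y i * y j * (w i * conj (w j)).re := by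
  rw [Complex.sq_norm, ← Complex.ofReal_re (Complex.normSq _), ← Complex.mul_conj, map_sum,
    Finset.sum_mul_sum, Complex.re_sum]
  refine Finset.sum_congr rfl fun i _ => ?_
  rw [Complex.re_sum]
  refine Finset.sum_congr rfl fun j _ => ?_
  rw [map_mul, Complex.conj_ofReal, ← Complex.re_ofReal_mul]
  congr 1
  push_cast
  ring

theorem sum_ofReal_mul_sub_mul_sum {ι : Type*} [Fintype ι] (x y : ι → ℝ) (a : ℝ) (w : ι → ℂ) :
    (∑ i, (x i : ℂ) * w i) - (a : ℂ) * ∑ i, (y i : ℂ) * w i =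
      ∑ i, ((x i - a * y i : ℝ) : ℂ) * w i := by
  rw [Finset.mul_sum, ← Finset.sum_sub_distrib]
  refine Finset.sum_congr rfl fun i _ => ?_
  push_cast
  ring

section
variable {Ω : Type*} [MeasurableSpace Ω] {μ : Measure Ω}

theorem integral_sum_ofReal_mul {ι : Type*} [Fintype ι] {X : ι → Ω → ℝ}
    (hX : ∀ i, Integrable (X i) μ) (w : ι → ℂ) :
    ∫ ω, ∑ i, (X i ω : ℂ) * w i ∂μ = ∑ i, ((∫ ω, X i ω ∂μ : ℝ) : ℂ) * w i := by
  rw [integral_finsetSum _ fun i _ => (hX i).ofReal.mul_const _]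
  simp only [integral_mul_const, integral_complex_ofReal]

theorem integral_norm_sq_sum_ofReal_mul_of_indepFun {ι : Type*} [Fintype ι] {Y : ι → Ω → ℝ}
    (hY : ∀ i, MemLp (Y i) 2 μ) (hmean : ∀ i, ∫ ω, Y i ω ∂μ = 0)
    (hind : Pairwise fun i j => IndepFun (Y i) (Y j) μ) (w : ι → ℂ) :
    ∫ ω, ‖∑ i, (Y i ω : ℂ) * w i‖ ^ 2 ∂μ = ∑ i, (∫ ω, Y i ω ^ 2 ∂μ) * ‖w i‖ ^ 2 := by
  have hint (i j : ι) : Integrable (fun ω => Y i ω * Y j ω) μ := (hY i).integrable_mul (hY j)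
  have horth {i j : ι} (hij : i ≠ j) : ∫ ω, Y i ω * Y j ω ∂μ = 0 := by
    rw [(hind hij).integral_fun_mul_eq_mul_integral (hY i).1 (hY j).1, hmean, zero_mul]
  simp_rw [norm_sq_sum_ofReal_mul]
  rw [integral_finsetSum _ fun i _ =>
    integrable_finsetSum _ fun j _ => (hint i j).mul_const _]
  refine Finset.sum_congr rfl fun i _ => ?_
  rw [integral_finsetSum _ fun j _ => (hint i j).mul_const _,
    Finset.sum_eq_single i (fun j _ hji => by rw [integral_mul_const, horth hji.symm, zero_mul])
      (fun h => absurd (Finset.mem_univ i) h)]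
  rw [integral_mul_const, Complex.mul_conj, Complex.ofReal_re, Complex.normSq_eq_norm_sq]
  simp_rw [sq]

variable {X : Ω → ℝ} {a b : ℝ} {wa wb : ℝ≥0∞}

theorem ae_eq_or_eq_of_map_eq_dirac_add_dirac (hX : AEMeasurable X μ)
    (hlaw : μ.map X = wa • Measure.dirac a + wb • Measure.dirac b) :
    ∀ᵐ ω ∂μ, X ω = a ∨ X ω = b := by
  refine ae_of_ae_map (p := fun x => x = a ∨ x = b) hX ?_
  rw [hlaw, ae_add_measure_iff]
  exact ⟨Measure.ae_smul_measure (by simp) _, Measure.ae_smul_measure (by simp) _⟩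

theorem integral_eq_of_map_eq_dirac_add_dirac (hX : AEMeasurable X μ) (hwa : wa ≠ ∞)
    (hwb : wb ≠ ∞) (hlaw : μ.map X = wa • Measure.dirac a + wb • Measure.dirac b) :
    ∫ ω, X ω ∂μ = wa.toReal * a + wb.toReal * b := by
  have hint (x : ℝ) {w : ℝ≥0∞} (hw : w ≠ ∞) :
      Integrable (fun y : ℝ => y) (w • Measure.dirac x) :=
    (integrable_dirac (by simp)).smul_measure hw
  calc ∫ ω, X ω ∂μ = ∫ x, x ∂(μ.map X) := (integral_map hX aestronglyMeasurable_id).symm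
    _ = wa.toReal * a + wb.toReal * b := by
      rw [hlaw, integral_add_measure (hint a hwa) (hint b hwb), integral_smul_measure,
        integral_smul_measure, integral_dirac, integral_dirac, smul_eq_mul, smul_eq_mul]

theorem memLp_top_of_map_eq_dirac_add_dirac (hX : AEMeasurable X μ)
    (hlaw : μ.map X = wa • Measure.dirac a + wb • Measure.dirac b) : MemLp X ∞ μ := by
  refine memLp_top_of_bound hX.aestronglyMeasurable (max |a| |b|) ?_
  filter_upwards [ae_eq_or_eq_of_map_eq_dirac_add_dirac hX hlaw] with ω h
  rcases h with h | h <;> simp [h]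

noncomputable def maskLaw (p : ℝ) : Measure ℝ :=
  ENNReal.ofReal (1 - p) • Measure.dirac 0 + ENNReal.ofReal p • Measure.dirac 1

noncomputable def quantErrorLaw (Δ : ℝ) : Measure ℝ :=
  (1 / 2 : ℝ≥0∞) • Measure.dirac (Δ / 2) + (1 / 2 : ℝ≥0∞) • Measure.dirac (-(Δ / 2))

structure IsMaskedSampleModel (μ : Measure Ω) (D Q : Ω → ℝ) (p Δ : ℝ) : Prop where
  aemeasurable_mask : AEMeasurable D μ
  aemeasurable_quantError : AEMeasurable Q μ
  map_mask : μ.map D = maskLaw p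
  map_quantError : μ.map Q = quantErrorLaw Δ
  indepFun : IndepFun D Q μ

namespace IsMaskedSampleModel
variable {D Q : Ω → ℝ} {p Δ : ℝ} (h : IsMaskedSampleModel μ D Q p Δ)
include h

theorem integral_mask (hp : 0 ≤ p) : ∫ ω, D ω ∂μ = p := by
  simpa [ENNReal.toReal_ofReal hp] using integral_eq_of_map_eq_dirac_add_dirac
    h.aemeasurable_mask ENNReal.ofReal_ne_top ENNReal.ofReal_ne_top h.map_mask

theorem integral_quantError : ∫ ω, Q ω ∂μ = 0 := by
  rw [integral_eq_of_map_eq_dirac_add_dirac h.aemeasurable_quantError (by simp) (by simp)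
    h.map_quantError]
  ring

theorem integral_mask_mul_quantError : ∫ ω, D ω * Q ω ∂μ = 0 := by
  rw [h.indepFun.integral_fun_mul_eq_mul_integral h.aemeasurable_mask.aestronglyMeasurable
    h.aemeasurable_quantError.aestronglyMeasurable, h.integral_quantError, mul_zero]

theorem memLp_top_mask : MemLp D ∞ μ :=
  memLp_top_of_map_eq_dirac_add_dirac h.aemeasurable_mask h.map_mask

theorem memLp_top_quantError : MemLp Q ∞ μ :=
  memLp_top_of_map_eq_dirac_add_dirac h.aemeasurable_quantError h.map_quantError

theorem memLp_top_sample [IsFiniteMeasure μ] (c : ℝ) : MemLp (fun ω => D ω * (c + Q ω)) ∞ μ :=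
  ((memLp_const c).add h.memLp_top_quantError).mul' h.memLp_top_mask

theorem integrable_mask_mul_quantError [IsFiniteMeasure μ] : Integrable (fun ω => D ω * Q ω) μ :=
  (h.memLp_top_quantError.mul' h.memLp_top_mask).integrable le_top

variable [IsProbabilityMeasure μ]

theorem integral_sample (hp : 0 ≤ p) (c : ℝ) : ∫ ω, D ω * (c + Q ω) ∂μ = p * c := by
  simp_rw [mul_add]
  rw [integral_add ((h.memLp_top_mask.integrable le_top).mul_const c)
      h.integrable_mask_mul_quantError, integral_mul_const, h.integral_mask hp,
    h.integral_mask_mul_quantError, add_zero]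

theorem integral_sample_sub (hp : 0 ≤ p) (c : ℝ) : ∫ ω, (D ω * (c + Q ω) - p * c) ∂μ = 0 := by
  rw [integral_sub ((h.memLp_top_sample c).integrable le_top) (integrable_const _),
    h.integral_sample hp, integral_const, probReal_univ, one_smul, sub_self]

theorem integral_sq_sample_sub (hp : 0 ≤ p) (c : ℝ) :
    ∫ ω, (D ω * (c + Q ω) - p * c) ^ 2 ∂μ = (p - p ^ 2) * c ^ 2 + p * Δ ^ 2 / 4 := by
  have hexpand : (fun ω => (D ω * (c + Q ω) - p * c) ^ 2) =ᵐ[μ] fun ω =>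
      ((c ^ 2 + Δ ^ 2 / 4 - 2 * p * c ^ 2) * D ω + (2 * c - 2 * p * c) * (D ω * Q ω))
        + p ^ 2 * c ^ 2 := by
    filter_upwards
      [ae_eq_or_eq_of_map_eq_dirac_add_dirac h.aemeasurable_mask h.map_mask,
        ae_eq_or_eq_of_map_eq_dirac_add_dirac h.aemeasurable_quantError h.map_quantError]
      with ω hD hQ
    rcases hD with hD | hD <;> rcases hQ with hQ | hQ <;> rw [hD, hQ] <;> ring
  have hint₁ : Integrable (fun ω => (c ^ 2 + Δ ^ 2 / 4 - 2 * p * c ^ 2) * D ω) μ :=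
    (h.memLp_top_mask.integrable le_top).const_mul _
  have hint₂ : Integrable (fun ω => (2 * c - 2 * p * c) * (D ω * Q ω)) μ :=
    h.integrable_mask_mul_quantError.const_mul _
  rw [integral_congr_ae hexpand, integral_add (hint₁.fun_add hint₂) (integrable_const _),
    integral_add hint₁ hint₂, integral_const_mul, integral_const_mul, h.integral_mask hp,
    h.integral_mask_mul_quantError, integral_const, probReal_univ, one_smul]
  ring

end IsMaskedSampleModel
end

theorem dm_factored_dft_mean_and_variance_general
    {Ω : Type*} [MeasurableSpace Ω] (μ : Measure Ω) [IsProbabilityMeasure μ]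
    (N : ℕ) (c : Fin N → ℝ) (p Δ : ℝ)
    (hp0 : 0 ≤ p)
    (d q : Fin N → Ω → ℝ)
    (hd : ∀ n, Measurable (d n)) (hq : ∀ n, Measurable (q n))
    (hindep : iIndepFun (Sum.elim d q : Fin N ⊕ Fin N → Ω → ℝ) μ)
    (hlawd : ∀ n, Measure.map (d n) μ =
      ENNReal.ofReal (1 - p) • Measure.dirac (0 : ℝ) +
      ENNReal.ofReal p • Measure.dirac (1 : ℝ))
    (hlawq : ∀ n, Measure.map (q n) μ =
      (1 / 2 : ENNReal) • Measure.dirac (Δ / 2) +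
      (1 / 2 : ENNReal) • Measure.dirac (-(Δ / 2)))
    (m : Fin N) :
    (∫ ω, ∑ n : Fin N, ((d n ω * (c n + q n ω) : ℝ) : ℂ) * dftKernel N n m ∂μ) =
      (p : ℂ) * ∑ n : Fin N, (c n : ℂ) * dftKernel N n m ∧
    (∫ ω, ‖(∑ n : Fin N, ((d n ω * (c n + q n ω) : ℝ) : ℂ) * dftKernel N n m) -
        (p : ℂ) * ∑ n : Fin N, (c n : ℂ) * dftKernel N n m‖ ^ 2 ∂μ) =
      (p - p ^ 2) * (∑ n : Fin N, (c n) ^ 2) + p * N * Δ ^ 2 / 4 := by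
  have hM (n : Fin N) : IsMaskedSampleModel μ (d n) (q n) p Δ :=
    ⟨(hd n).aemeasurable, (hq n).aemeasurable, hlawd n, hlawq n,
      by simpa using hindep.indepFun (Sum.inl_ne_inr (a := n) (b := n))⟩
  set Y : Fin N → Ω → ℝ := fun n ω => d n ω * (c n + q n ω) - p * c n
  have hY (n : Fin N) : MemLp (Y n) 2 μ :=
    (((hM n).memLp_top_sample (c n)).sub (memLp_const _)).mono_exponent le_top
  have hYind : Pairwise fun n k => IndepFun (Y n) (Y k) μ := fun n k hnk =>
    (hindep.indepFun_prodMk_sumElim hd hq hnk).comp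
      (by fun_prop : Measurable fun x : ℝ × ℝ => x.1 * (c n + x.2) - p * c n)
      (by fun_prop : Measurable fun x : ℝ × ℝ => x.1 * (c k + x.2) - p * c k)
  refine ⟨?_, ?_⟩
  · rw [integral_sum_ofReal_mul fun n => ((hM n).memLp_top_sample (c n)).integrable le_top,
      Finset.mul_sum]
    refine Finset.sum_congr rfl fun n _ => ?_
    rw [(hM n).integral_sample hp0]
    push_cast
    ring
  · simp_rw [sum_ofReal_mul_sub_mul_sum]
    rw [integral_norm_sq_sum_ofReal_mul_of_indepFun hY
      (fun n => (hM n).integral_sample_sub hp0 _) hYind]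
    simp only [Y, norm_dftKernel, one_pow, mul_one, (hM _).integral_sq_sample_sub hp0]
    rw [Finset.sum_add_distrib, ← Finset.mul_sum, Finset.sum_const, Finset.card_univ,
      Fintype.card_fin, nsmul_eq_mul]
    ring

/-- Factored missing-sampling model `z(n) = d(n)·(c(n) + q(n))`
with `d(0),…,d(N−1), q(0),…,q(N−1)` mutually independent, `d(n) ~ Bernoulli(p)`
and `q(n) = ±Δ/2` equiprobable. Then for every frequency index `m`:
`E[Z(m)] = p·C(m)` and
`E[|Z(m) − p·C(m)|²] = (p − p²)·Σ c(n)² + p·N·Δ²/4`. -/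
theorem dm_factored_dft_mean_and_variance
    {Ω : Type*} [MeasurableSpace Ω] (μ : Measure Ω) [IsProbabilityMeasure μ]
    (N : ℕ) (hN : 0 < N) (c : Fin N → ℝ) (p Δ : ℝ)
    (hp0 : 0 ≤ p) (hp1 : p ≤ 1) (hΔ : 0 < Δ)
    (d q : Fin N → Ω → ℝ)
    (hd : ∀ n, Measurable (d n)) (hq : ∀ n, Measurable (q n))
    (hindep : iIndepFun (Sum.elim d q : Fin N ⊕ Fin N → Ω → ℝ) μ)
    (hlawd : ∀ n, Measure.map (d n) μ =
      ENNReal.ofReal (1 - p) • Measure.dirac (0 : ℝ) +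
      ENNReal.ofReal p • Measure.dirac (1 : ℝ))
    (hlawq : ∀ n, Measure.map (q n) μ =
      (1 / 2 : ENNReal) • Measure.dirac (Δ / 2) +
      (1 / 2 : ENNReal) • Measure.dirac (-(Δ / 2)))
    (m : Fin N) :
    (∫ ω, ∑ n : Fin N, ((d n ω * (c n + q n ω) : ℝ) : ℂ) * dftKernel N n m ∂μ) =
      (p : ℂ) * ∑ n : Fin N, (c n : ℂ) * dftKernel N n m ∧
    (∫ ω, ‖(∑ n : Fin N, ((d n ω * (c n + q n ω) : ℝ) : ℂ) * dftKernel N n m) -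
        (p : ℂ) * ∑ n : Fin N, (c n : ℂ) * dftKernel N n m‖ ^ 2 ∂μ) =
      (p - p ^ 2) * (∑ n : Fin N, (c n) ^ 2) + p * N * Δ ^ 2 / 4 :=
  dm_factored_dft_mean_and_variance_general μ N c p Δ hp0 d q hd hq hindep hlawd hlawq m
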